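/- arXiv:1509.06880 — 5 statements merged into one kernel-verified Lean document; each statement's English description precedes it below -/
import Mathlib

section
/- Define H(s,t) = 1/(1+exp((s+t)/2)) + 1/(1+exp((s-t)/2)). For every nonnegative integer k and real b, the integral F_{2k+1}(b) = ∫₀^∞ x^{2k+1} H(x,b) dx equals (2k+1)! · Σ_{i=0}^{k+1} ζ(2i)·(2^{2i+1}-4)·b^{2k+2-2i}/(2k+2-2i)!, where ζ(0) = -1/2. -/
/-!
Write `f u = 1 / (1 + exp (u / 2))`, so that `H x b = f (x + b) + f (x - b)` and
`f (-u) = 1 - f u`. Shifting the two integrals so that `f` is evaluated at the integration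
variable, and folding the piece over `(-b, 0)` back onto `(0, b)` with the reflection identity,
gives for odd `n`
  `∫₀^∞ xⁿ H(x, b) dx = bⁿ⁺¹/(n + 1) + ∫₀^∞ ((u + b)ⁿ + (u - b)ⁿ) f(u) du`,
and by the binomial theorem only the odd moments of `f` survive. Expanding `f` as the
geometric series `Σ (-1)ʲ e^{-(j+1)u/2}` and integrating termwise gives
`∫₀^∞ uᵐ f(u) du = 2ᵐ⁺¹ m! η(m + 1) = m! (2ᵐ⁺¹ - 2) ζ(m + 1)` for `m ≥ 1`, with `η` the
alternating zeta function. The term `bⁿ⁺¹ / (n + 1)` is the `i = 0` summand, as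
`ζ(0)(2 - 4) = 1`.
-/

open MeasureTheory Real Set

noncomputable def H (s t : ℝ) : ℝ :=
  1 / (1 + Real.exp ((s + t) / 2)) + 1 / (1 + Real.exp ((s - t) / 2))

open Filter Asymptotics
open scoped Nat

noncomputable def fermi (u : ℝ) : ℝ := 1 / (1 + exp (u / 2))

lemma H_eq_fermi_add_fermi (x b : ℝ) : H x b = fermi (x + b) + fermi (x - b) := rfl

lemma continuous_fermi : Continuous fermi :=
  continuous_const.div (by fun_prop) fun u ↦ by positivity

lemma fermi_nonneg (u : ℝ) : 0 ≤ fermi u := by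
  unfold fermi; positivity

lemma fermi_le_exp (u : ℝ) : fermi u ≤ exp (-(u / 2)) := by
  rw [fermi, div_le_iff₀ (by positivity), mul_add, mul_one, ← exp_add, neg_add_cancel, exp_zero]
  linarith [exp_nonneg (-(u / 2))]

lemma fermi_neg (u : ℝ) : fermi (-u) = 1 - fermi u := by
  have h : exp (-(u / 2)) * exp (u / 2) = 1 := by rw [← exp_add, neg_add_cancel, exp_zero]
  rw [fermi, fermi, neg_div]
  field_simp
  linear_combination -h

lemma isBigO_fermi_add_const (d : ℝ) :
    (fun u ↦ fermi (u + d)) =O[atTop] fun u ↦ exp (-(1 / 2) * u) := by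
  refine IsBigO.of_bound (exp (-(d / 2))) (Eventually.of_forall fun u ↦ ?_)
  rw [norm_of_nonneg (fermi_nonneg _), norm_of_nonneg (exp_nonneg _), ← exp_add]
  exact (fermi_le_exp _).trans_eq (by ring_nf)

lemma integrableOn_Ioi_add_pow_mul {g : ℝ → ℝ} {r : ℝ} (hr : 0 < r) (hg : Continuous g)
    (hg_decay : g =O[atTop] fun u ↦ exp (-r * u)) (m : ℕ) (a c : ℝ) :
    IntegrableOn (fun u ↦ (u + c) ^ m * g u) (Ioi a) := by
  refine integrable_of_isBigO_exp_neg (half_pos hr) (by fun_prop) ?_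
  have hpow : (fun u : ℝ ↦ (u + c) ^ m) =O[atTop] fun u ↦ exp (r / 2 * u) := by
    have := ((isLittleO_pow_exp_pos_mul_atTop m (half_pos hr)).comp_tendsto
      (tendsto_atTop_add_const_right _ c tendsto_id)).isBigO
    refine this.trans (IsBigO.of_bound (exp (r / 2 * c)) (Eventually.of_forall fun u ↦ ?_))
    simp only [Function.comp_apply, id_eq, norm_of_nonneg (exp_nonneg _), ← exp_add]
    exact le_of_eq (by ring_nf)
  refine (hpow.mul hg_decay).congr_right fun u ↦ ?_
  rw [← exp_add]; ring_nf

lemma integrableOn_Ioi_add_pow_mul_fermi (m : ℕ) (a c d : ℝ) :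
    IntegrableOn (fun u ↦ (u + c) ^ m * fermi (u + d)) (Ioi a) :=
  integrableOn_Ioi_add_pow_mul one_half_pos (continuous_fermi.comp (by fun_prop))
    (isBigO_fermi_add_const d) m a c

lemma integrableOn_pow_mul_exp_neg_mul (m : ℕ) {r : ℝ} (hr : 0 < r) :
    IntegrableOn (fun u ↦ u ^ m * exp (-(r * u))) (Ioi 0) := by
  simpa using integrableOn_Ioi_add_pow_mul hr (by fun_prop)
    (isBigO_refl (fun u ↦ exp (-r * u)) _ |>.congr_left fun u ↦ by ring_nf) m 0 0

lemma integral_pow_mul_exp_neg_mul (m : ℕ) {r : ℝ} (hr : 0 < r) :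
    ∫ u in Ioi 0, u ^ m * exp (-(r * u)) = m ! / r ^ (m + 1) := by
  have h := integral_rpow_mul_exp_neg_mul_Ioi (a := m + 1) (by positivity) hr
  rw [add_sub_cancel_right, Gamma_nat_eq_factorial, ← Nat.cast_succ, rpow_natCast] at h
  simp only [rpow_natCast] at h
  rw [h, one_div_pow, one_div_mul_eq_div]

lemma hasSum_fermi {u : ℝ} (hu : 0 < u) :
    HasSum (fun j : ℕ ↦ (-1) ^ j * exp (-((j + 1) / 2 * u))) (fermi u) := by
  set q := exp (-(u / 2))
  have hq : ‖-q‖ < 1 := by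
    rw [norm_neg, norm_of_nonneg (exp_nonneg _), exp_lt_one_iff]; linarith
  have hfermi : q * (1 - -q)⁻¹ = fermi u := by
    have h : q * exp (u / 2) = 1 := by rw [← exp_add, neg_add_cancel, exp_zero]
    have : 1 + q ≠ 0 := (add_pos one_pos (exp_pos _)).ne'
    rw [fermi, sub_neg_eq_add]
    field_simp
    linear_combination h
  refine hfermi ▸ ((hasSum_geometric_of_norm_lt_one hq).mul_left q).congr_fun fun j ↦ ?_
  rw [neg_pow q, mul_left_comm, ← pow_succ', ← exp_nat_mul]
  push_cast
  ring_nf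

lemma summable_one_div_nat_add_one_pow {p : ℕ} (hp : 1 < p) :
    Summable fun j : ℕ ↦ 1 / ((j : ℝ) + 1) ^ p := by
  simpa using (summable_nat_add_iff 1).mpr (summable_one_div_nat_pow.mpr hp)

lemma hasSum_integral_pow_mul_fermi {m : ℕ} (hm : 1 ≤ m) :
    HasSum (fun j : ℕ ↦ (-1) ^ j * (2 ^ (m + 1) * m ! / ((j : ℝ) + 1) ^ (m + 1)))
      (∫ u in Ioi 0, u ^ m * fermi u) := by
  have hr (j : ℕ) : 0 < ((j : ℝ) + 1) / 2 := by positivity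
  have hint (j : ℕ) : ∫ u in Ioi 0, u ^ m * exp (-((j + 1) / 2 * u))
      = 2 ^ (m + 1) * m ! / ((j : ℝ) + 1) ^ (m + 1) := by
    rw [integral_pow_mul_exp_neg_mul m (hr j), div_pow, div_div_eq_mul_div, mul_comm]
  have hnorm (j : ℕ) : ∫ u in Ioi 0, ‖(-1) ^ j * (u ^ m * exp (-((j + 1) / 2 * u)))‖
      = 2 ^ (m + 1) * m ! / ((j : ℝ) + 1) ^ (m + 1) := by
    rw [← hint]
    refine setIntegral_congr_fun measurableSet_Ioi fun u (hu : 0 < u) ↦ ?_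
    simp [abs_of_pos hu]
  have hsum := hasSum_integral_of_summable_integral_norm
    (fun j ↦ (integrableOn_pow_mul_exp_neg_mul m (hr j)).const_mul ((-1 : ℝ) ^ j))
    (by simpa only [hnorm, mul_one_div] using
      (summable_one_div_nat_add_one_pow (by omega : 1 < m + 1)).mul_left (2 ^ (m + 1) * m ! : ℝ))
  have hfermi : ∫ u in Ioi 0, ∑' j : ℕ, (-1) ^ j * (u ^ m * exp (-((j + 1) / 2 * u)))
      = ∫ u in Ioi 0, u ^ m * fermi u := by
    refine setIntegral_congr_fun measurableSet_Ioi fun u (hu : 0 < u) ↦ ?_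
    simp only [mul_left_comm _ (u ^ m), tsum_mul_left, (hasSum_fermi hu).tsum_eq]
  rw [hfermi] at hsum
  exact hsum.congr_fun fun j ↦ by rw [integral_const_mul, hint]

lemma hasSum_neg_one_pow_div_nat_add_one_pow {s : ℕ} (hs : 1 < s) :
    HasSum (fun j : ℕ ↦ (-1) ^ j / ((j : ℝ) + 1) ^ s)
      ((1 - 2 / 2 ^ s) * ∑' j : ℕ, 1 / ((j : ℝ) + 1) ^ s) := by
  set a : ℕ → ℝ := fun j ↦ 1 / ((j : ℝ) + 1) ^ s
  have ha : Summable a := summable_one_div_nat_add_one_pow hs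
  have hodd : HasSum (fun j ↦ a (2 * j + 1)) ((∑' j, a j) / 2 ^ s) :=
    ha.hasSum.div_const _ |>.congr_fun fun j ↦ by
      simp only [a]; push_cast; rw [div_div, ← mul_pow]; ring_nf
  have heven : HasSum (fun j ↦ a (2 * j)) (∑' j, a j - (∑' j, a j) / 2 ^ s) := by
    have he : Summable fun j ↦ a (2 * j) :=
      ha.comp_injective (mul_right_injective₀ two_ne_zero)
    have hsplit := tsum_even_add_odd he hodd.summable
    rw [hodd.tsum_eq] at hsplit
    exact eq_sub_of_add_eq hsplit ▸ he.hasSum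
  convert HasSum.even_add_odd (f := fun j : ℕ ↦ (-1) ^ j / ((j : ℝ) + 1) ^ s)
    (heven.congr_fun fun j ↦ ?_) (hodd.neg.congr_fun fun j ↦ ?_) using 1
  · ring
  · simp [a, pow_mul]
  · simp [a, pow_succ, pow_mul, neg_div]

lemma riemannZeta_natCast_eq_tsum {s : ℕ} (hs : 1 < s) :
    riemannZeta s = ((∑' j : ℕ, 1 / ((j : ℝ) + 1) ^ s : ℝ) : ℂ) := by
  rw [zeta_eq_tsum_one_div_nat_add_one_cpow (by simpa using hs), Complex.ofReal_tsum]
  push_cast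
  simp only [Complex.cpow_natCast]

lemma integral_pow_mul_fermi {m : ℕ} (hm : 1 ≤ m) :
    ((∫ u in Ioi 0, u ^ m * fermi u : ℝ) : ℂ)
      = m ! * (2 ^ (m + 1) - 2) * riemannZeta (m + 1) := by
  have hs : 1 < m + 1 := by omega
  have hη := (hasSum_neg_one_pow_div_nat_add_one_pow hs).mul_left (2 ^ (m + 1) * m ! : ℝ)
  rw [(hasSum_integral_pow_mul_fermi hm).unique (hη.congr_fun fun j ↦ by ring),
    ← Nat.cast_succ, riemannZeta_natCast_eq_tsum hs]
  push_cast
  field_simp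

lemma setIntegral_Ioi_comp_add_right {E : Type*} [NormedAddCommGroup E] [NormedSpace ℝ E]
    (g : ℝ → E) (a c : ℝ) : ∫ x in Ioi a, g (x + c) = ∫ x in Ioi (a + c), g x := by
  simpa using (measurePreserving_add_right volume c).setIntegral_preimage_emb
    (measurableEmbedding_addRight c) g (Ioi (a + c))

lemma integral_pow_mul_fermi_add (n : ℕ) (b : ℝ) :
    ∫ x in Ioi 0, x ^ n * fermi (x + b)
      = (∫ u in Ioi 0, (u - b) ^ n * fermi u) - ∫ u in 0..b, (u - b) ^ n * fermi u := by
  have hint (a : ℝ) : IntegrableOn (fun u ↦ (u - b) ^ n * fermi u) (Ioi a) := by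
    simpa [sub_eq_add_neg] using integrableOn_Ioi_add_pow_mul_fermi n a (-b) 0
  have hshift := setIntegral_Ioi_comp_add_right (fun u ↦ (u - b) ^ n * fermi u) 0 b
  simp only [add_sub_cancel_right, zero_add] at hshift
  rw [hshift, ← intervalIntegral.integral_Ioi_sub_Ioi' (hint 0) (hint b), sub_sub_cancel]

lemma integral_pow_mul_fermi_sub (n : ℕ) (b : ℝ) :
    ∫ x in Ioi 0, x ^ n * fermi (x - b)
      = (∫ u in Ioi 0, (u + b) ^ n * fermi u) + ∫ u in 0..b, (b - u) ^ n * (1 - fermi u) := by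
  have hrefl := intervalIntegral.integral_comp_neg (a := 0) (b := b)
    (fun u ↦ (u - -b) ^ n * fermi u)
  simp only [neg_zero, fermi_neg, sub_neg_eq_add, neg_add_eq_sub] at hrefl
  have h := integral_pow_mul_fermi_add n (-b)
  simp only [← sub_eq_add_neg, sub_neg_eq_add] at h
  rw [h, hrefl, intervalIntegral.integral_symm 0 (-b), sub_eq_add_neg]

theorem integral_pow_mul_H {n : ℕ} (hn : Odd n) (b : ℝ) :
    ∫ x in Ioi 0, x ^ n * H x b
      = b ^ (n + 1) / (n + 1) + ∫ u in Ioi 0, ((u + b) ^ n + (u - b) ^ n) * fermi u := by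
  have hI (c d : ℝ) : IntegrableOn (fun u ↦ (u + c) ^ n * fermi (u + d)) (Ioi 0) :=
    integrableOn_Ioi_add_pow_mul_fermi n 0 c d
  have hf := continuous_fermi
  have hcont₁ : Continuous fun u ↦ (b - u) ^ n * (1 - fermi u) := by fun_prop
  have hcont₂ : Continuous fun u ↦ (u - b) ^ n * fermi u := by fun_prop
  have hsplit : ∫ x in Ioi 0, x ^ n * H x b
      = (∫ x in Ioi 0, x ^ n * fermi (x + b)) + ∫ x in Ioi 0, x ^ n * fermi (x - b) := by
    simp only [H_eq_fermi_add_fermi, mul_add]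
    have h₁ : IntegrableOn (fun x ↦ x ^ n * fermi (x + b)) (Ioi 0) := by simpa using hI 0 b
    have h₂ : IntegrableOn (fun x ↦ x ^ n * fermi (x - b)) (Ioi 0) := by
      simpa [sub_eq_add_neg] using hI 0 (-b)
    exact integral_add h₁ h₂
  have hfinite : (∫ u in 0..b, (b - u) ^ n * (1 - fermi u)) - ∫ u in 0..b, (u - b) ^ n * fermi u
      = b ^ (n + 1) / (n + 1) := by
    rw [← intervalIntegral.integral_sub (hcont₁.intervalIntegrable _ _)
      (hcont₂.intervalIntegrable _ _)]
    have hodd (u : ℝ) : (b - u) ^ n * (1 - fermi u) - (u - b) ^ n * fermi u = (b - u) ^ n := by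
      rw [← neg_sub b u, hn.neg_pow]; ring
    simp [hodd, intervalIntegral.integral_comp_sub_left fun u ↦ u ^ n]
  have h₁ : IntegrableOn (fun u ↦ (u + b) ^ n * fermi u) (Ioi 0) := by simpa using hI b 0
  have h₂ : IntegrableOn (fun u ↦ (u - b) ^ n * fermi u) (Ioi 0) := by
    simpa [sub_eq_add_neg] using hI (-b) 0
  rw [hsplit, integral_pow_mul_fermi_add, integral_pow_mul_fermi_sub, ← hfinite]
  simp only [add_mul]
  rw [integral_add h₁ h₂]
  ring

theorem Finset.sum_range_two_mul {M : Type*} [AddCommMonoid M] (f : ℕ → M) (m : ℕ) :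
    ∑ j ∈ range (2 * m), f j = ∑ i ∈ range m, (f (2 * i) + f (2 * i + 1)) := by
  induction m with
  | zero => simp
  | succ m ih => rw [mul_add_one, sum_range_succ, sum_range_succ, sum_range_succ, ih, add_assoc]

theorem add_pow_add_sub_pow_odd {R : Type*} [CommRing R] (x y : R) (k : ℕ) :
    (x + y) ^ (2 * k + 1) + (x - y) ^ (2 * k + 1)
      = ∑ i ∈ Finset.range (k + 1),
          2 * (2 * k + 1).choose (2 * i + 1) * y ^ (2 * (k - i)) * x ^ (2 * i + 1) := by
  rw [sub_eq_add_neg, add_pow, add_pow, ← Finset.sum_add_distrib, ← mul_add_one 2 k,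
    Finset.sum_range_two_mul]
  refine Finset.sum_congr rfl fun i hi ↦ ?_
  have hik : i ≤ k := Nat.lt_succ_iff.mp (Finset.mem_range.mp hi)
  rw [show 2 * k + 1 - 2 * i = 2 * (k - i) + 1 by omega,
    show 2 * k + 1 - (2 * i + 1) = 2 * (k - i) by omega,
    (odd_two_mul_add_one _).neg_pow, (even_two_mul _).neg_pow]
  ring

theorem integral_odd_pow_mul_H (k : ℕ) (b : ℝ) :
    ∫ x in Ioi 0, x ^ (2 * k + 1) * H x b
      = b ^ (2 * k + 2) / (2 * k + 2) + ∑ i ∈ Finset.range (k + 1),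
          2 * (2 * k + 1).choose (2 * i + 1) * b ^ (2 * (k - i)) *
            ∫ u in Ioi 0, u ^ (2 * i + 1) * fermi u := by
  have hI (i : ℕ) (c : ℝ) : IntegrableOn (fun u ↦ c * u ^ i * fermi u) (Ioi 0) := by
    simpa [mul_assoc, IntegrableOn] using (integrableOn_Ioi_add_pow_mul_fermi i 0 0 0).const_mul c
  rw [integral_pow_mul_H (odd_two_mul_add_one k)]
  simp only [add_pow_add_sub_pow_odd, Finset.sum_mul]
  rw [integral_finsetSum _ fun i _ ↦ hI _ _]
  push_cast
  congr 1
  · ring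
  refine Finset.sum_congr rfl fun i _ ↦ ?_
  rw [← integral_const_mul]
  simp only [mul_assoc]

lemma factorial_mul_div_factorial_succ {K : Type*} [Field K] [CharZero K] (n : ℕ) (x : K) :
    n ! * (x / (n + 1)!) = x / (n + 1) := by
  rw [Nat.factorial_succ]
  push_cast
  have := Nat.cast_ne_zero (R := K).mpr n.factorial_ne_zero
  field_simp

lemma choose_mul_factorial_mul_div_factorial {K : Type*} [Field K] [CharZero K] {n j : ℕ}
    (hjn : j ≤ n) (x : K) :
    n.choose j * j ! * x = n ! * (x / (n - j)!) := by
  rw [← Nat.choose_mul_factorial_mul_factorial hjn]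
  push_cast
  have := Nat.cast_ne_zero (R := K).mpr (n - j).factorial_ne_zero
  field_simp

/-- F_{2k+1}(b) = ∫₀^∞ x^{2k+1} H(x,b) dx equals
    (2k+1)! · Σ_{i=0}^{k+1} ζ(2i)·(2^{2i+1}-4)·b^{2k+2-2i}/(2k+2-2i)!,
    where ζ(0) = -1/2 (the Riemann zeta function). -/
theorem stmt_4 (k : ℕ) (b : ℝ) :
    ((∫ x in Ioi (0:ℝ), x ^ (2 * k + 1) * H x b : ℝ) : ℂ)
      = (Nat.factorial (2 * k + 1) : ℂ) *
        ∑ i ∈ Finset.range (k + 2),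
          riemannZeta (2 * i) * ((2 : ℂ) ^ (2 * i + 1) - 4) *
            (b : ℂ) ^ (2 * k + 2 - 2 * i) / (Nat.factorial (2 * k + 2 - 2 * i) : ℂ) := by
  rw [integral_odd_pow_mul_H, Complex.ofReal_add, Complex.ofReal_sum,
    Finset.sum_range_succ' _ (k + 1), mul_add, Finset.mul_sum, add_comm]
  congr 1
  · refine Finset.sum_congr rfl fun i hi ↦ ?_
    have hik : i ≤ k := Nat.lt_succ_iff.mp (Finset.mem_range.mp hi)
    push_cast
    rw [integral_pow_mul_fermi (by omega), show 2 * k + 2 - 2 * (i + 1) = 2 * (k - i) by omega,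
      show 2 * (k - i) = 2 * k + 1 - (2 * i + 1) by omega,
      ← choose_mul_factorial_mul_div_factorial (by omega)]
    push_cast
    ring_nf
  · rw [Nat.mul_zero, Nat.sub_zero, factorial_mul_div_factorial_succ, Nat.cast_zero, mul_zero,
      riemannZeta_zero]
    push_cast
    ring
end

section
/- For every integer i ≥ 2, ζ(2i) = (2/(2i+1)) · Σ_{j=1}^{i-1} ζ(2j)·ζ(2i-2j). -/
open PowerSeries Finset Real

private lemma d_exp : d⁄dX ℚ (PowerSeries.exp ℚ) = PowerSeries.exp ℚ := by
  ext n
  rw [PowerSeries.coeff_derivative, PowerSeries.coeff_exp, PowerSeries.coeff_exp]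
  simp only [Algebra.algebraMap_self, RingHom.id_apply]
  rw [Nat.factorial_succ]
  push_cast
  have h1 : ((n : ℚ) + 1) ≠ 0 := by positivity
  have h2 : ((n.factorial : ℚ)) ≠ 0 := by exact_mod_cast n.factorial_ne_zero
  field_simp

private lemma exp_sub_one_ne : (PowerSeries.exp ℚ - 1) ≠ 0 := by
  intro h
  have := congrArg (PowerSeries.coeff 1) h
  simp [PowerSeries.coeff_exp, PowerSeries.coeff_one] at this

private lemma B_sq : (bernoulliPowerSeries ℚ) * (bernoulliPowerSeries ℚ) =
    (1 - X) * bernoulliPowerSeries ℚ - X * (d⁄dX ℚ (bernoulliPowerSeries ℚ)) := by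
  set B := bernoulliPowerSeries ℚ with hB
  set E := PowerSeries.exp ℚ with hEdef
  have h1 : B * (E - 1) = X := bernoulliPowerSeries_mul_exp_sub_one ℚ
  have h2 : B * (d⁄dX ℚ (E - 1)) + (E - 1) * (d⁄dX ℚ B) = 1 := by
    have h := congrArg (d⁄dX ℚ) h1
    rw [Derivation.leibniz, PowerSeries.derivative_X, smul_eq_mul, smul_eq_mul] at h
    exact h
  have hdE : d⁄dX ℚ (E - 1) = E := by
    rw [map_sub, d_exp, Derivation.map_one_eq_zero, sub_zero]
  rw [hdE] at h2
  have h3 : (E - 1) * (d⁄dX ℚ B) = 1 - B * E := eq_sub_of_add_eq' h2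
  have key : (B * B) * (E - 1)^2 = ((1 - X) * B - X * (d⁄dX ℚ B)) * (E - 1)^2 := by
    linear_combination (X * (E - 1)) * h3 +
      (B * (E - 1) + X - (1 - X) * (E - 1) - X * E) * h1
  exact mul_right_cancel₀ (pow_ne_zero 2 exp_sub_one_ne) key

private lemma coeff_B (n : ℕ) : PowerSeries.coeff n (bernoulliPowerSeries ℚ)
    = bernoulli n / n.factorial := by
  simp [bernoulliPowerSeries, PowerSeries.coeff_mk]

private lemma bern_aux (m : ℕ) :
    ∑ p ∈ Finset.HasAntidiagonal.antidiagonal (m + 1),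
        (bernoulli p.1 / p.1.factorial) * (bernoulli p.2 / p.2.factorial)
      = bernoulli (m+1) / (m+1).factorial - bernoulli m / m.factorial
        - ((m+1 : ℕ) : ℚ) * (bernoulli (m+1) / (m+1).factorial) := by
  have h := congrArg (PowerSeries.coeff (m+1)) B_sq
  rw [PowerSeries.coeff_mul] at h
  simp only [coeff_B] at h
  rw [sub_mul, one_mul, map_sub, map_sub, PowerSeries.coeff_succ_X_mul,
    PowerSeries.coeff_succ_X_mul, PowerSeries.coeff_derivative] at h
  simp only [coeff_B] at h
  rw [h]
  push_cast
  ring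

private lemma bern_odd_zero {n : ℕ} (h : Odd n) (h1 : 1 < n) : bernoulli n = 0 := by
  rw [bernoulli_eq_bernoulli'_of_ne_one (by omega), bernoulli'_eq_zero_of_odd h h1]

private lemma bern_key (i : ℕ) (hi : 2 ≤ i) :
    ∑ j ∈ Finset.Icc 1 (i-1),
        (bernoulli (2*j) / (2*j).factorial) * (bernoulli (2*(i-j)) / (2*(i-j)).factorial)
      = -(((2*i+1 : ℕ)) : ℚ) * (bernoulli (2*i) / (2*i).factorial) := by
  have haux := bern_aux (2*i-1)
  rw [show 2*i-1+1 = 2*i by omega] at haux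
  set g : ℕ → ℚ := fun k => (bernoulli k / k.factorial) * (bernoulli (2*i-k) / (2*i-k).factorial)
    with hg
  have h0 : bernoulli (2*i-1) = 0 := bern_odd_zero ⟨i-1, by omega⟩ (by omega)
  rw [Finset.Nat.sum_antidiagonal_eq_sum_range_succ_mk] at haux
  have hrange : ∑ k ∈ Finset.range (2*i+1), g k
      = ∑ k ∈ insert 0 (insert (2*i) ((Finset.Icc 1 (i-1)).image (fun j => 2*j))), g k := by
    symm
    apply Finset.sum_subset
    · intro k hk
      simp only [Finset.mem_insert, Finset.mem_image, Finset.mem_Icc] at hk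
      simp only [Finset.mem_range]
      rcases hk with rfl | rfl | ⟨j, ⟨hj1, hj2⟩, rfl⟩ <;> omega
    · intro k hk hk2
      simp only [Finset.mem_insert, Finset.mem_image, Finset.mem_Icc, not_or, not_exists] at hk2
      simp only [Finset.mem_range] at hk
      obtain ⟨hk0, hki, hk3⟩ := hk2
      have hodd : Odd k := by
        rcases Nat.even_or_odd k with ⟨c, hc⟩ | h
        · exfalso
          have := hk3 c
          omega
        · exact h
      rcases eq_or_ne k 1 with rfl | hk1
      · simp [hg, h0]
      · have : bernoulli k = 0 := bern_odd_zero hodd (by omega)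
        simp [hg, this]
  have hIcc : ∀ j ∈ Finset.Icc 1 (i-1), g (2*j)
      = (bernoulli (2*j) / (2*j).factorial) * (bernoulli (2*(i-j)) / (2*(i-j)).factorial) := by
    intro j hj
    simp only [Finset.mem_Icc] at hj
    have : 2*i - 2*j = 2*(i-j) := by omega
    simp [hg, this]
  have hins : ∑ k ∈ insert 0 (insert (2*i) ((Finset.Icc 1 (i-1)).image (fun j => 2*j))), g k
      = g 0 + g (2*i) + ∑ j ∈ Finset.Icc 1 (i-1), g (2*j) := by
    rw [Finset.sum_insert, Finset.sum_insert, Finset.sum_image]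
    · ring
    · intro a _ b _ hab; simp only at hab; omega
    · simp only [Finset.mem_image, Finset.mem_Icc, not_exists]
      intro j; omega
    · simp only [Finset.mem_insert, Finset.mem_image, Finset.mem_Icc, not_or, not_exists]
      refine ⟨by omega, fun j => by omega⟩
  have hg0 : g 0 = bernoulli (2*i) / (2*i).factorial := by
    simp [hg]
  have hg2i : g (2*i) = bernoulli (2*i) / (2*i).factorial := by
    simp [hg]
  rw [hrange, hins, hg0, hg2i, h0] at haux
  rw [Finset.sum_congr rfl hIcc] at haux
  push_cast at haux ⊢
  linear_combination haux

/-- For every integer i ≥ 2, ζ(2i) = (2/(2i+1)) Σ_{j=1}^{i-1} ζ(2j)ζ(2i-2j). -/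
theorem stmt_6 (i : ℕ) (hi : 2 ≤ i) :
    riemannZeta (2 * i)
      = (2 / (2 * (i : ℂ) + 1)) *
        ∑ j ∈ Finset.Icc 1 (i - 1), riemannZeta (2 * j) * riemannZeta (2 * i - 2 * j) := by
  have key := bern_key i hi
  have keyC : ∑ j ∈ Finset.Icc 1 (i-1),
      ((bernoulli (2*j) : ℂ) / (2*j).factorial *
        ((bernoulli (2*(i-j)) : ℂ) / (2*(i-j)).factorial))
      = -(2*(i:ℂ)+1) * ((bernoulli (2*i) : ℂ) / (2*i).factorial) := by
    have h := congrArg (fun q : ℚ => (q : ℂ)) key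
    push_cast at h
    convert h using 2
  have hterm : ∀ j ∈ Finset.Icc 1 (i-1),
      riemannZeta (2*j) * riemannZeta (2*(i:ℂ) - 2*(j:ℂ))
        = ((-1)^i * 2^(2*i-2) * (π:ℂ)^(2*i)) *
          ((bernoulli (2*j) : ℂ) / (2*j).factorial *
            ((bernoulli (2*(i-j)) : ℂ) / (2*(i-j)).factorial)) := by
    intro j hj
    simp only [Finset.mem_Icc] at hj
    obtain ⟨a, rfl⟩ : ∃ a, j = a + 1 := ⟨j - 1, by omega⟩
    obtain ⟨b, rfl⟩ : ∃ b, i = a + 1 + (b + 1) := ⟨i - a - 2, by omega⟩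
    rw [show (2*((a+1+(b+1):ℕ):ℂ) - 2*((a+1:ℕ):ℂ)) = 2*(((b+1:ℕ)):ℂ) from by push_cast; ring]
    rw [riemannZeta_two_mul_nat (show a+1 ≠ 0 by omega),
      riemannZeta_two_mul_nat (show b+1 ≠ 0 by omega)]
    rw [show a+1+(b+1) - (a+1) = b+1 from by omega,
      show 2*(a+1)-1 = 2*a+1 from by omega,
      show 2*(b+1)-1 = 2*b+1 from by omega,
      show 2*(a+1+(b+1))-2 = 2*a+2*b+2 from by omega,
      show 2*(a+1) = 2*a+2 from by omega,
      show 2*(b+1) = 2*b+2 from by omega,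
      show 2*(a+1+(b+1)) = 2*a+2*b+4 from by omega]
    ring
  rw [riemannZeta_two_mul_nat (show i ≠ 0 by omega),
    Finset.sum_congr rfl hterm, ← Finset.mul_sum, keyC]
  have hne : (2*(i:ℂ)+1) ≠ 0 := by
    have : ((2*i+1 : ℕ) : ℂ) ≠ 0 := Nat.cast_ne_zero.mpr (by omega)
    push_cast at this
    convert this using 2
  obtain ⟨c, rfl⟩ : ∃ c, i = c + 2 := ⟨i - 2, by omega⟩
  rw [show 2*(c+2)-1 = 2*c+3 from by omega, show 2*(c+2)-2 = 2*c+2 from by omega,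
    show 2*(c+2) = 2*c+4 from by omega]
  push_cast at hne ⊢
  have hfac : ((2*c+4).factorial : ℂ) ≠ 0 := Nat.cast_ne_zero.mpr (Nat.factorial_ne_zero _)
  field_simp [hfac, hne]
  ring
end

section
/- Define sid(b₁,b_i;x) = log((cosh(x/2) + cosh((b₁+b_i)/2))/(cosh(x/2) + cosh((b₁-b_i)/2))), mid(b₁;b_i,x) = 2·log((exp(b₁/2)+exp((b_i+x)/2))/(exp(-b₁/2)+exp((b_i+x)/2))), and H(s,t) = 1/(1+exp((s+t)/2)) + 1/(1+exp((s-t)/2)). Then for all real b₁, b_i, x, the partial derivative of sid(b₁,b_i;x) + mid(b₁;b_i,x) with respect to b₁ equals (1/2)·(H(x, b₁+b_i) + H(x, b₁-b_i)). -/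
open Real

/-- sid(b₁,bᵢ;x) = log((cosh(x/2)+cosh((b₁+bᵢ)/2))/(cosh(x/2)+cosh((b₁-bᵢ)/2))). -/
noncomputable def sid (b₁ bᵢ x : ℝ) : ℝ :=
  Real.log ((Real.cosh (x / 2) + Real.cosh ((b₁ + bᵢ) / 2)) /
      (Real.cosh (x / 2) + Real.cosh ((b₁ - bᵢ) / 2)))

/-- mid(b₁; bᵢ, x) = 2 log((e^{b₁/2} + e^{(bᵢ+x)/2})/(e^{-b₁/2} + e^{(bᵢ+x)/2})). -/
noncomputable def mid (b₁ bᵢ x : ℝ) : ℝ :=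
  2 * Real.log ((Real.exp (b₁ / 2) + Real.exp ((bᵢ + x) / 2)) /
      (Real.exp (-b₁ / 2) + Real.exp ((bᵢ + x) / 2)))

lemma sinh_div_cosh_add_cosh (a t : ℝ) :
    sinh t / (cosh a + cosh t) = 1 / (1 + exp (a - t)) - 1 / (1 + exp (a + t)) := by
  have hpos : 0 < cosh a + cosh t := by positivity
  rw [cosh_eq, cosh_eq, sinh_eq] at *
  rw [exp_sub, exp_add, exp_neg, exp_neg] at *
  field_simp
  ring

lemma exp_div_exp_add_exp (s t : ℝ) : exp t / (exp t + exp s) = 1 / (1 + exp (s - t)) := by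
  rw [exp_sub]
  field_simp

lemma hasDerivAt_log_cosh_add_cosh (a t : ℝ) :
    HasDerivAt (fun t => log (cosh a + cosh t))
      (1 / (1 + exp (a - t)) - 1 / (1 + exp (a + t))) t := by
  rw [← sinh_div_cosh_add_cosh]
  exact ((hasDerivAt_cosh t).const_add _).log (by positivity)

lemma hasDerivAt_log_exp_add_exp (s t : ℝ) :
    HasDerivAt (fun t => log (exp t + exp s)) (1 / (1 + exp (s - t))) t := by
  rw [← exp_div_exp_add_exp]
  exact ((hasDerivAt_exp t).add_const _).log (by positivity)

lemma sid_eq_log_sub_log (b₁ bᵢ x : ℝ) :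
    sid b₁ bᵢ x = log (cosh (x / 2) + cosh ((b₁ + bᵢ) / 2)) -
      log (cosh (x / 2) + cosh ((b₁ - bᵢ) / 2)) :=
  log_div (by positivity) (by positivity)

lemma mid_eq_two_mul_log_sub_log (b₁ bᵢ x : ℝ) :
    mid b₁ bᵢ x = 2 * (log (exp (b₁ / 2) + exp ((bᵢ + x) / 2)) -
      log (exp (-b₁ / 2) + exp ((bᵢ + x) / 2))) := by
  rw [mid, log_div (by positivity) (by positivity)]

lemma hasDerivAt_sid (b₁ bᵢ x : ℝ) :
    HasDerivAt (fun b => sid b bᵢ x)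
      ((1 / 2) * (1 / (1 + exp (x / 2 - (b₁ + bᵢ) / 2)) - 1 / (1 + exp (x / 2 + (b₁ + bᵢ) / 2)) -
        1 / (1 + exp (x / 2 - (b₁ - bᵢ) / 2)) + 1 / (1 + exp (x / 2 + (b₁ - bᵢ) / 2)))) b₁ := by
  simp only [sid_eq_log_sub_log]
  refine (((hasDerivAt_log_cosh_add_cosh _ _).comp b₁
    (((hasDerivAt_id' b₁).add_const bᵢ).div_const 2)).sub
      ((hasDerivAt_log_cosh_add_cosh _ _).comp b₁
        (((hasDerivAt_id' b₁).sub_const bᵢ).div_const 2))).congr_deriv ?_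
  ring

lemma hasDerivAt_mid (b₁ bᵢ x : ℝ) :
    HasDerivAt (fun b => mid b bᵢ x)
      (1 / (1 + exp ((bᵢ + x) / 2 - b₁ / 2)) + 1 / (1 + exp ((bᵢ + x) / 2 + b₁ / 2))) b₁ := by
  simp only [mid_eq_two_mul_log_sub_log]
  refine ((((hasDerivAt_log_exp_add_exp _ _).comp b₁ ((hasDerivAt_id' b₁).div_const 2)).sub
    ((hasDerivAt_log_exp_add_exp _ _).comp b₁
      ((hasDerivAt_neg' b₁).div_const 2))).const_mul 2).congr_deriv ?_
  rw [neg_div, sub_neg_eq_add]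
  ring

/-- ∂(sid(b₁,bᵢ;x) + mid(b₁;bᵢ,x))/∂b₁ = ½(H(x, b₁+bᵢ) + H(x, b₁-bᵢ)). -/
theorem stmt_8 (b₁ bᵢ x : ℝ) :
    HasDerivAt (fun b => sid b bᵢ x + mid b bᵢ x)
      ((1 / 2) * (H x (b₁ + bᵢ) + H x (b₁ - bᵢ))) b₁ := by
  refine ((hasDerivAt_sid b₁ bᵢ x).add (hasDerivAt_mid b₁ bᵢ x)).congr_deriv ?_
  simp only [H]
  ring_nf
end

section
/- The polynomial V₀₄(b₁,b₂,b₃,b₄) = 2π² + (1/2)(b₁²+b₂²+b₃²+b₄²) satisfies Mirzakhani's recursion in the case (g,n) = (0,4): specifically, ∂(2b₁V₀₄)/∂b₁ = Σ_{i=2}^{4} ∫₀^∞ x·[H(x, b₁+b_i) + H(x, b₁-b_i)] dx, where H(s,t) = 1/(1+exp((s+t)/2)) + 1/(1+exp((s-t)/2)) and V₀₃ = 1. -/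
open MeasureTheory Real Set

/-- V₀₄(b₁,b₂,b₃,b₄) = 2π² + (1/2)(b₁²+b₂²+b₃²+b₄²). -/
noncomputable def V₀₄ (b₁ b₂ b₃ b₄ : ℝ) : ℝ :=
  2 * π ^ 2 + (1 / 2) * (b₁ ^ 2 + b₂ ^ 2 + b₃ ^ 2 + b₄ ^ 2)

/-!
Write `H x t = ψ (x + t) + ψ (x - t)` with `ψ u = sigmoid (-(u / 2))`, so that
`ψ u + ψ (-u) = 1`. Translating the half-line integrals and using this symmetry on the
overlap `[-a, a]` gives `∫₀^∞ x (ψ (x + a) + ψ (x - a)) dx = a² / 2 + 2 ∫₀^∞ x ψ x dx`, and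
expanding `ψ` as a geometric series in `exp (-x / 2)` gives `∫₀^∞ x ψ x dx = 4 η(2) = π² / 3`.
Hence each integral on the right-hand side is `b₁² + bᵢ² + 4π² / 3`, and their sum is the
derivative of the cubic `2 b₁ V₀₄`.
-/

lemma hasSum_one_div_succ_sq : HasSum (fun n : ℕ => 1 / ((n : ℝ) + 1) ^ 2) (π ^ 2 / 6) := by
  have h := (hasSum_nat_add_iff (f := fun n : ℕ => 1 / (n : ℝ) ^ 2) 1).mpr
    (by simpa using hasSum_zeta_two)
  exact_mod_cast h

lemma hasSum_neg_one_pow_div_succ_sq :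
    HasSum (fun n : ℕ => (-1) ^ n / ((n : ℝ) + 1) ^ 2) (π ^ 2 / 12) := by
  have hodd : HasSum (fun n : ℕ => 1 / ((n : ℝ) + 1) ^ 2 - (-1) ^ n / ((n : ℝ) + 1) ^ 2)
      (0 + 1 / 2 * (π ^ 2 / 6)) := by
    refine HasSum.even_add_odd ?_ ?_
    · simp [pow_mul]
    · refine (hasSum_one_div_succ_sq.mul_left (1 / 2)).congr_fun fun k => ?_
      rw [pow_succ (-1 : ℝ), pow_mul]
      push_cast
      field_simp
      ring
  have h := hasSum_one_div_succ_sq.sub hodd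
  rw [show π ^ 2 / 6 - (0 + 1 / 2 * (π ^ 2 / 6)) = π ^ 2 / 12 by ring] at h
  exact h.congr_fun fun n => by ring

lemma integral_mul_exp_neg_mul {r : ℝ} (hr : 0 < r) :
    ∫ x in Ioi 0, x * exp (-(r * x)) = 1 / r ^ 2 := by
  have h := integral_rpow_mul_exp_neg_mul_Ioi two_pos hr
  rw [show (2 : ℝ) - 1 = 1 by norm_num] at h
  simpa [Gamma_two] using h

lemma integrableOn_mul_exp_neg_mul {r : ℝ} (hr : 0 < r) :
    IntegrableOn (fun x => x * exp (-(r * x))) (Ioi 0) :=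
  .of_integral_ne_zero (by rw [integral_mul_exp_neg_mul hr]; positivity)

lemma sigmoid_le_exp (x : ℝ) : sigmoid x ≤ exp x := by
  rw [sigmoid_def, ← inv_inv (exp x), ← exp_neg, inv_le_inv₀ (by positivity) (exp_pos _)]
  linarith [exp_pos (-x)]

lemma hasSum_sigmoid_neg {x : ℝ} (hx : 0 < x) :
    HasSum (fun n : ℕ => (-1) ^ n * exp (-((n + 1) * x))) (sigmoid (-x)) := by
  have hq : |-exp (-x)| < 1 := by
    rw [abs_neg, abs_of_pos (exp_pos _), exp_lt_one_iff]; linarith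
  have h := (hasSum_geometric_of_abs_lt_one hq).mul_left (exp (-x))
  rw [show exp (-x) * (1 - -exp (-x))⁻¹ = sigmoid (-x) by
    rw [sigmoid_def, neg_neg, sub_neg_eq_add, exp_neg]; field_simp; ring] at h
  refine h.congr_fun fun n => ?_
  rw [neg_pow (exp (-x)), ← exp_nat_mul, mul_left_comm, ← exp_add]
  ring_nf

lemma integral_mul_sigmoid_neg : ∫ x in Ioi 0, x * sigmoid (-x) = π ^ 2 / 12 := by
  set F : ℕ → ℝ → ℝ := fun n x => (-1) ^ n * (x * exp (-((n + 1) * x)))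
  have hsucc (n : ℕ) : (0 : ℝ) < n + 1 := by positivity
  have hF_int (n : ℕ) : IntegrableOn (F n) (Ioi 0) :=
    (integrableOn_mul_exp_neg_mul (hsucc n)).const_mul _
  have hF_integral (n : ℕ) : ∫ x in Ioi 0, F n x = (-1) ^ n / ((n : ℝ) + 1) ^ 2 := by
    rw [integral_const_mul, integral_mul_exp_neg_mul (hsucc n), mul_one_div]
  have hF_norm (n : ℕ) : ∫ x in Ioi 0, ‖F n x‖ = 1 / ((n : ℝ) + 1) ^ 2 := by
    rw [← integral_mul_exp_neg_mul (hsucc n)]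
    refine setIntegral_congr_fun measurableSet_Ioi fun x (hx : 0 < x) => ?_
    simp [F, norm_mul, abs_of_pos hx]
  have h := hasSum_integral_of_summable_integral_norm hF_int
    (by simpa only [hF_norm] using hasSum_one_div_succ_sq.summable)
  simp only [hF_integral] at h
  rw [← h.unique hasSum_neg_one_pow_div_succ_sq]
  refine setIntegral_congr_fun measurableSet_Ioi fun x (hx : 0 < x) => ?_
  simp only [F, mul_left_comm _ x, tsum_mul_left, (hasSum_sigmoid_neg hx).tsum_eq]

lemma integral_mul_sigmoid_neg_half : ∫ x in Ioi 0, x * sigmoid (-(x / 2)) = π ^ 2 / 3 := by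
  have h := integral_comp_mul_left_Ioi (fun u => u * sigmoid (-u)) 0
    (by norm_num : (0 : ℝ) < 1 / 2)
  rw [mul_zero, integral_mul_sigmoid_neg, smul_eq_mul] at h
  calc ∫ x in Ioi 0, x * sigmoid (-(x / 2))
      = ∫ x in Ioi 0, 2 * (1 / 2 * x * sigmoid (-(1 / 2 * x))) := by
        refine setIntegral_congr_fun measurableSet_Ioi fun x _ => ?_
        ring_nf
    _ = π ^ 2 / 3 := by rw [integral_const_mul, h]; ring

lemma integrableOn_mul_sigmoid_neg_half (a c : ℝ) :
    IntegrableOn (fun x => (x - c) * sigmoid (-(x / 2))) (Ioi a) := by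
  refine integrable_of_isBigO_exp_neg (b := 1 / 4) (by norm_num)
    ((continuous_sub_right c).mul (continuous_sigmoid.comp (by fun_prop))).continuousOn ?_
  refine Asymptotics.IsBigO.of_bound (4 * exp (-c / 4)) ?_
  filter_upwards [Filter.eventually_ge_atTop c] with x hx
  have hlin : x - c ≤ 4 * exp ((x - c) / 4) := by linarith [add_one_le_exp ((x - c) / 4)]
  rw [norm_mul, norm_of_nonneg (by linarith), norm_of_nonneg (sigmoid_nonneg _),
    norm_of_nonneg (exp_pos _).le]
  calc (x - c) * sigmoid (-(x / 2)) ≤ 4 * exp ((x - c) / 4) * exp (-(x / 2)) :=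
        mul_le_mul hlin (sigmoid_le_exp _) (sigmoid_nonneg _) (by positivity)
    _ = 4 * exp (-c / 4) * exp (-(1 / 4) * x) := by
        rw [mul_assoc, mul_assoc, ← exp_add, ← exp_add]; ring_nf

section Translation

variable {E : Type*} [NormedAddCommGroup E]

lemma integrableOn_Ioi_comp_add_right (g : ℝ → E) (a c : ℝ) :
    IntegrableOn (fun x => g (x + a)) (Ioi c) ↔ IntegrableOn g (Ioi (c + a)) := by
  have h := (measurePreserving_add_right volume a).integrableOn_comp_preimage
    (measurableEmbedding_addRight a) (f := g) (s := Ioi (c + a))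
  rwa [preimage_add_const_Ioi, add_sub_cancel_right] at h

lemma integral_comp_add_right_Ioi [NormedSpace ℝ E] (g : ℝ → E) (a c : ℝ) :
    ∫ x in Ioi c, g (x + a) = ∫ x in Ioi (c + a), g x := by
  have h := (measurePreserving_add_right volume a).setIntegral_preimage_emb
    (measurableEmbedding_addRight a) g (Ioi (c + a))
  rwa [preimage_add_const_Ioi, add_sub_cancel_right] at h

end Translation

section Complementary

variable {f : ℝ → ℝ}

lemma integral_Ioi_mul_comp_add (hf : Continuous f) {a : ℝ}
    (hint : IntegrableOn (fun x => (x - a) * f x) (Ioi a)) :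
    ∫ x in Ioi 0, x * f (x + a)
      = (∫ x in Ioi 0, (x - a) * f x) - ∫ x in 0..a, (x - a) * f x := by
  have h : ∫ x in Ioi 0, x * f (x + a) = ∫ x in Ioi a, (x - a) * f x := by
    simpa using integral_comp_add_right_Ioi (fun x => (x - a) * f x) a 0
  have hsplit : (∫ x in 0..a, (x - a) * f x) + ∫ x in Ioi a, (x - a) * f x
      = ∫ x in Ioi 0, (x - a) * f x := intervalIntegral.integral_interval_add_Ioi'
    ((by fun_prop : Continuous fun x => (x - a) * f x).intervalIntegrable 0 a) hint
  linarith

lemma intervalIntegral_mul_add_intervalIntegral_neg (hf : Continuous f)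
    (hcompl : ∀ x, f x + f (-x) = 1) (a : ℝ) :
    (∫ x in 0..a, (x - a) * f x) + ∫ x in 0..-a, (x + a) * f x = -(a ^ 2 / 2) := by
  have hneg : ∫ x in 0..-a, (x + a) * f x = -∫ x in 0..a, (-x + a) * f (-x) := by
    rw [intervalIntegral.integral_comp_neg (fun x => (x + a) * f x), neg_zero,
      intervalIntegral.integral_symm]
  have hpt (x : ℝ) : (x - a) * f x - (-x + a) * f (-x) = x - a := by
    linear_combination (x - a) * hcompl x
  have hdiff : ∫ x in 0..a, ((x - a) * f x - (-x + a) * f (-x)) = -(a ^ 2 / 2) := by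
    simp only [hpt, intervalIntegral.integral_comp_sub_right fun x => x, integral_id]
    ring
  rw [hneg, ← hdiff, intervalIntegral.integral_sub
    ((by fun_prop : Continuous fun x => (x - a) * f x).intervalIntegrable 0 a)
    ((by fun_prop : Continuous fun x => (-x + a) * f (-x)).intervalIntegrable 0 a)]
  abel

lemma integral_Ioi_mul_comp_add_add_comp_sub (hf : Continuous f)
    (hcompl : ∀ x, f x + f (-x) = 1)
    (hint : ∀ a c, IntegrableOn (fun x => (x - c) * f x) (Ioi a)) (a : ℝ) :
    ∫ x in Ioi 0, x * (f (x + a) + f (x - a)) = a ^ 2 / 2 + 2 * ∫ x in Ioi 0, x * f x := by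
  have hint_add (b : ℝ) : IntegrableOn (fun x => (x + a) * f x) (Ioi b) := by
    simpa only [sub_neg_eq_add] using hint b (-a)
  have hint_plus : IntegrableOn (fun x => x * f (x + a)) (Ioi 0) := by
    simpa using (integrableOn_Ioi_comp_add_right (fun x => (x - a) * f x) a 0).mpr
      (by simpa using hint a a)
  have hint_minus : IntegrableOn (fun x => x * f (x - a)) (Ioi 0) := by
    simpa [← sub_eq_add_neg] using
      (integrableOn_Ioi_comp_add_right (fun x => (x + a) * f x) (-a) 0).mpr
      (by simpa using hint_add (-a))
  have hplus := integral_Ioi_mul_comp_add hf (hint a a)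
  have hminus := integral_Ioi_mul_comp_add hf (hint (-a) (-a))
  simp only [← sub_eq_add_neg, sub_neg_eq_add] at hminus
  have hIoi : (∫ x in Ioi 0, (x - a) * f x) + ∫ x in Ioi 0, (x + a) * f x
      = 2 * ∫ x in Ioi 0, x * f x := by
    rw [← integral_add (hint 0 a) (hint_add 0), ← integral_const_mul]
    refine setIntegral_congr_fun measurableSet_Ioi fun x _ => ?_
    ring
  simp_rw [mul_add]
  rw [integral_add hint_plus hint_minus]
  linarith [intervalIntegral_mul_add_intervalIntegral_neg hf hcompl a]

end Complementary

lemma H_eq_sigmoid (x t : ℝ) :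
    H x t = sigmoid (-((x + t) / 2)) + sigmoid (-((x - t) / 2)) := by
  simp [H, sigmoid_def, one_div]

lemma integral_mul_H (t : ℝ) : ∫ x in Ioi 0, x * H x t = t ^ 2 / 2 + 2 * (π ^ 2 / 3) := by
  have hcompl (u : ℝ) : sigmoid (-(u / 2)) + sigmoid (-(-u / 2)) = 1 := by
    rw [neg_div, neg_neg, sigmoid_neg]; ring
  simp only [H_eq_sigmoid]
  rw [← integral_mul_sigmoid_neg_half]
  exact integral_Ioi_mul_comp_add_add_comp_sub (f := fun u => sigmoid (-(u / 2)))
    (continuous_sigmoid.comp (by fun_prop)) hcompl integrableOn_mul_sigmoid_neg_half t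

lemma integral_mul_H_add_H (b c : ℝ) :
    ∫ x in Ioi 0, x * (H x (b + c) + H x (b - c)) = b ^ 2 + c ^ 2 + 4 * (π ^ 2 / 3) := by
  have hint (t : ℝ) : IntegrableOn (fun x => x * H x t) (Ioi 0) :=
    .of_integral_ne_zero (by rw [integral_mul_H]; positivity)
  simp_rw [mul_add]
  rw [integral_add (hint _) (hint _), integral_mul_H, integral_mul_H]
  ring

theorem stmt_14_general (b₁ b₂ b₃ b₄ : ℝ) :
    deriv (fun t => 2 * t * V₀₄ t b₂ b₃ b₄) b₁
      = (∫ x in Ioi (0:ℝ), x * (H x (b₁ + b₂) + H x (b₁ - b₂)))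
        + (∫ x in Ioi (0:ℝ), x * (H x (b₁ + b₃) + H x (b₁ - b₃)))
        + (∫ x in Ioi (0:ℝ), x * (H x (b₁ + b₄) + H x (b₁ - b₄))) := by
  set c := 4 * π ^ 2 + b₂ ^ 2 + b₃ ^ 2 + b₄ ^ 2
  have hV : (fun t => 2 * t * V₀₄ t b₂ b₃ b₄) = fun t => t ^ 3 + c * t := by
    ext t; simp only [V₀₄, c]; ring
  have hderiv : HasDerivAt (fun t => t ^ 3 + c * t) (3 * b₁ ^ 2 + c) b₁ := by
    simpa using (hasDerivAt_pow 3 b₁).fun_add ((hasDerivAt_id b₁).const_mul c)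
  rw [hV, hderiv.deriv, integral_mul_H_add_H, integral_mul_H_add_H, integral_mul_H_add_H]
  ring

/-- V₀₄ satisfies Mirzakhani's recursion for (g,n) = (0,4):
    ∂(2b₁V₀₄)/∂b₁ = Σ_{i=2}^{4} ∫₀^∞ x·[H(x, b₁+bᵢ) + H(x, b₁-bᵢ)] dx (with V₀₃ = 1). -/
theorem stmt_14 (b₁ b₂ b₃ b₄ : ℝ) (h₁ : 0 ≤ b₁) (h₂ : 0 ≤ b₂) (h₃ : 0 ≤ b₃) (h₄ : 0 ≤ b₄) :
    deriv (fun t => 2 * t * V₀₄ t b₂ b₃ b₄) b₁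
      = (∫ x in Ioi (0:ℝ), x * (H x (b₁ + b₂) + H x (b₁ - b₂)))
        + (∫ x in Ioi (0:ℝ), x * (H x (b₁ + b₃) + H x (b₁ - b₃)))
        + (∫ x in Ioi (0:ℝ), x * (H x (b₁ + b₄) + H x (b₁ - b₄))) :=
  stmt_14_general b₁ b₂ b₃ b₄
end

section
/- The polynomial V₁₁(b) = π²/12 + b²/48 satisfies the once-punctured-torus unwrapping identity: for b = 0, 2·V₁₁(0) = ∫₀^∞ 2ℓ/(1+exp(ℓ)) dℓ = π²/6. -/
open MeasureTheory Real Set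

/-! Expanding `1 / (1 + eᵗ) = ∑ₙ (-1)ⁿ e^{-(n+1)t}` and integrating termwise against `t`
(legitimate since `∑ ∫ |·| = ζ(2) < ∞`) gives `∫₀^∞ t / (1 + eᵗ) dt = ∑ₙ (-1)ⁿ / (n+1)² = η(2)`.
Splitting off the odd terms, `η(2) = ζ(2) - 2 · ζ(2) / 4 = π² / 12`. -/

theorem HasSum.neg_one_pow_mul {α : Type*} [Ring α] [UniformSpace α] [IsUniformAddGroup α]
    [CompleteSpace α] [T2Space α] {f : ℕ → α} {a b : α} (hf : HasSum f a)
    (hodd : HasSum (fun k ↦ f (2 * k + 1)) b) :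
    HasSum (fun n ↦ (-1) ^ n * f n) (a - 2 * b) := by
  obtain ⟨c, heven⟩ : Summable fun k ↦ f (2 * k) :=
    hf.summable.comp_injective (mul_right_injective₀ (two_ne_zero' ℕ))
  have hc : c = a - b := eq_sub_of_add_eq ((heven.even_add_odd hodd).unique hf)
  have he : HasSum (fun k ↦ (-1) ^ (2 * k) * f (2 * k)) (a - b) := by
    rw [← hc]
    exact heven.congr_fun fun k ↦ by rw [pow_mul, neg_one_sq, one_pow, one_mul]
  have ho : HasSum (fun k ↦ (-1) ^ (2 * k + 1) * f (2 * k + 1)) (-b) :=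
    hodd.neg.congr_fun fun k ↦ by rw [pow_succ, pow_mul, neg_one_sq, one_pow, one_mul, neg_one_mul]
  convert HasSum.even_add_odd (f := fun n ↦ (-1) ^ n * f n) he ho using 1
  rw [two_mul, sub_add_eq_sub_sub, sub_eq_add_neg (a - b)]

theorem hasSum_one_div_nat_add_one_sq :
    HasSum (fun n : ℕ ↦ 1 / ((n : ℝ) + 1) ^ 2) (π ^ 2 / 6) := by
  simpa using (hasSum_nat_add_iff' 1).mpr hasSum_zeta_two

theorem hasSum_neg_one_pow_div_nat_add_one_sq :
    HasSum (fun n : ℕ ↦ (-1) ^ n / ((n : ℝ) + 1) ^ 2) (π ^ 2 / 12) := by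
  have hodd : HasSum (fun k : ℕ ↦ 1 / (((2 * k + 1 : ℕ) : ℝ) + 1) ^ 2) (π ^ 2 / 6 / 4) := by
    refine (hasSum_one_div_nat_add_one_sq.div_const 4).congr_fun fun k ↦ ?_
    push_cast
    field_simp
    ring
  have h := hasSum_one_div_nat_add_one_sq.neg_one_pow_mul hodd
  rw [show π ^ 2 / 6 - 2 * (π ^ 2 / 6 / 4) = π ^ 2 / 12 by ring] at h
  simpa only [mul_one_div] using h

theorem integral_mul_exp_neg_mul_Ioi {c : ℝ} (hc : 0 < c) :
    ∫ t in Ioi (0 : ℝ), t * exp (-(c * t)) = 1 / c ^ 2 := by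
  have h := integral_rpow_mul_exp_neg_mul_Ioi two_pos hc
  norm_num [Real.Gamma_two] at h
  simpa using h

theorem integrableOn_mul_exp_neg_mul_Ioi {c : ℝ} (hc : 0 < c) :
    IntegrableOn (fun t ↦ t * exp (-(c * t))) (Ioi 0) :=
  .of_integral_ne_zero (by rw [integral_mul_exp_neg_mul_Ioi hc]; positivity)

theorem hasSum_neg_one_pow_mul_exp_neg {t : ℝ} (ht : 0 < t) :
    HasSum (fun n : ℕ ↦ (-1) ^ n * exp (-(((n : ℝ) + 1) * t))) (1 / (1 + exp t)) := by
  have hr : ‖-exp (-t)‖ < 1 := by simpa using ht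
  have hval : 1 / (1 + exp t) = exp (-t) * (1 - -exp (-t))⁻¹ := by
    rw [sub_neg_eq_add, exp_neg]
    field_simp
    ring
  rw [hval]
  refine ((hasSum_geometric_of_norm_lt_one hr).mul_left (exp (-t))).congr_fun fun n ↦ ?_
  rw [neg_pow (exp (-t)), ← exp_nat_mul, mul_left_comm, ← exp_add]
  ring_nf

theorem integral_Ioi_div_one_add_exp :
    ∫ t in Ioi (0 : ℝ), t / (1 + exp t) = π ^ 2 / 12 := by
  set F : ℕ → ℝ → ℝ := fun n t ↦ (-1) ^ n * (t * exp (-(((n : ℝ) + 1) * t)))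
  have hpos (n : ℕ) : (0 : ℝ) < n + 1 := n.cast_add_one_pos
  have hint (n : ℕ) : IntegrableOn (F n) (Ioi 0) :=
    (integrableOn_mul_exp_neg_mul_Ioi (hpos n)).const_mul _
  have hnorm : (fun n ↦ ∫ t in Ioi 0, ‖F n t‖) = fun n : ℕ ↦ 1 / ((n : ℝ) + 1) ^ 2 := by
    ext n
    rw [← integral_mul_exp_neg_mul_Ioi (hpos n)]
    refine setIntegral_congr_fun measurableSet_Ioi fun t (ht : 0 < t) ↦ ?_
    simp [F, abs_of_pos ht]
  have hterms : HasSum (fun n ↦ ∫ t in Ioi 0, F n t) (∫ t in Ioi 0, ∑' n, F n t) :=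
    hasSum_integral_of_summable_integral_norm hint
      (hnorm ▸ hasSum_one_div_nat_add_one_sq.summable)
  have hF (n : ℕ) : ∫ t in Ioi 0, F n t = (-1) ^ n / ((n : ℝ) + 1) ^ 2 := by
    rw [integral_const_mul, integral_mul_exp_neg_mul_Ioi (hpos n), mul_one_div]
  have hsum : ∫ t in Ioi 0, ∑' n, F n t = ∫ t in Ioi 0, t / (1 + exp t) := by
    refine setIntegral_congr_fun measurableSet_Ioi fun t ht ↦ ?_
    rw [← mul_one_div, ← ((hasSum_neg_one_pow_mul_exp_neg ht).mul_left t).tsum_eq]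
    simp only [F, mul_left_comm]
  rw [← hsum]
  exact hterms.unique (by simpa only [hF] using hasSum_neg_one_pow_div_nat_add_one_sq)

noncomputable def V₁₁ (b : ℝ) : ℝ := π ^ 2 / 12 + b ^ 2 / 48

/-- The once-punctured-torus unwrapping identity:
    2·V₁₁(0) = ∫₀^∞ 2ℓ/(1+e^ℓ) dℓ = π²/6. -/
theorem stmt_15 :
    2 * V₁₁ 0 = (∫ l in Ioi (0:ℝ), 2 * l / (1 + Real.exp l)) ∧
    (∫ l in Ioi (0:ℝ), 2 * l / (1 + Real.exp l)) = π ^ 2 / 6 := by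
  have h : ∫ l in Ioi (0:ℝ), 2 * l / (1 + Real.exp l) = π ^ 2 / 6 := by
    simp_rw [mul_div_assoc]
    rw [integral_const_mul, integral_Ioi_div_one_add_exp]
    ring
  exact ⟨by rw [h, V₁₁]; ring, h⟩
end
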